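/- Let X be a connected Hausdorff topological space, V a locally convex topological vector space, and f : X → V continuous with local convexity data. If f is open onto its image and f(X) is closed in a convex subset C of V, then f(X) is convex. -/

import Mathlib

/-- A set `C ⊆ V` is a cone with vertex `v₀`. -/
def IsConeWithVertex {V : Type*} [AddCommGroup V] [Module ℝ V]
    (C : Set V) (v₀ : V) : Prop :=
  v₀ ∈ C ∧ ∀ v ∈ C, v ≠ v₀ → ∀ l : ℝ, 0 ≤ l → (1 - l) • v₀ + l • v ∈ C

/-- `f` has local convexity data: for each `x` and every sufficiently small open
neighborhood `U` of `x` there is a convex cone `C` with vertex `f x` such that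
(VN) `f(U) ⊆ C` is a neighborhood of `f x` in `C` (subspace topology), and
(SLO) `f|_U : U → C` is an open map and for every smaller neighborhood `U'` of
`x` the set `f(U')` is a neighborhood of `f x` in `C`. -/
def HasLocalConvexityData {X V : Type*} [TopologicalSpace X] [TopologicalSpace V]
    [AddCommGroup V] [Module ℝ V] (f : X → V) : Prop :=
  ∀ x : X, ∀ W ∈ nhds x, ∃ U ∈ nhds x, U ⊆ W ∧ IsOpen U ∧ ∃ C : Set V,
    Convex ℝ C ∧ IsConeWithVertex C (f x) ∧
    -- (VN)
    f '' U ⊆ C ∧ (∃ N ∈ nhds (f x), C ∩ N ⊆ f '' U) ∧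
    -- (SLO): openness of `f|_U` into `C` ...
    (∀ O : Set X, IsOpen O → O ⊆ U → ∀ y ∈ O, ∃ N ∈ nhds (f y), C ∩ N ⊆ f '' O) ∧
    -- ... and `f(U')` is a neighborhood of the vertex for every smaller `U'`
    (∀ U' ∈ nhds x, U' ⊆ U → ∃ N ∈ nhds (f x), C ∩ N ⊆ f '' U')

/-- `f` is open onto its image `f(X)` (with the subspace topology). -/
def OpenOntoImage {X V : Type*} [TopologicalSpace X] [TopologicalSpace V]
    (f : X → V) : Prop :=
  ∀ O : Set X, IsOpen O → ∃ W : Set V, IsOpen W ∧ f '' O = W ∩ Set.range f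

/-- A subset `S` of a topological vector space is locally convex if every point
of `S` has a neighborhood in `V` whose intersection with `S` is convex. -/
def IsLocallyConvexSet {V : Type*} [TopologicalSpace V] [AddCommGroup V]
    [Module ℝ V] (S : Set V) : Prop :=
  ∀ v ∈ S, ∃ N ∈ nhds v, Convex ℝ (N ∩ S)

/-!
Near `f x` the image `S = f(X)` coincides with the convex cone `C_x` of the local convexity data,
because `f` is open onto its image; so `S` is locally convex. Since `S` is connected, any two of
its points are joined by a chain of segments in `S` (each point sees its convex neighbourhood), and
Klee's argument shortens such chains: if `[a, m]` and `[m, b]` lie in `S`, the set of `ρ ∈ [0, 1]`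
with `[a, m + ρ • (b - m)] ⊆ S` is closed, as `S` is closed in the convex set `C`, and open to the
right. Openness comes from filling a thin triangle with vertex `a` along `[a, m]`: local convexity,
made uniform along the compact segment `[a, m]`, lets one extend the filled part strip by strip
from `m` towards `a`, at the cost of halving the triangle's width at each strip.
-/

open Set Filter Topology

section Fan

variable {V : Type*} [AddCommGroup V] [Module ℝ V]

lemma mem_segment_fan (a d e : V) {t u ρ : ℝ} (hu : 0 ≤ u) (hut : u < t) :
    a + u • d + (u * ρ) • e ∈
      segment ℝ (a + (u * t / (2 * t - u)) • d) (a + t • d + (t * (2 * ρ)) • e) := by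
  have ht : 0 < t := hu.trans_lt hut
  have hden : 0 < 2 * t - u := by linarith
  refine ⟨1 - u / (2 * t), u / (2 * t), ?_, by positivity, by ring, ?_⟩
  · rw [sub_nonneg, div_le_one (by positivity)]; linarith
  · match_scalars <;> field_simp <;> ring

/-- The part over the parameters `u ∈ [t, 1]` of the triangle with vertices `a`, `a + d` and
`a + d + r • e`. -/
def fan (a d e : V) (t r : ℝ) : Set V :=
  (fun q : ℝ × ℝ => a + q.1 • d + (q.1 * q.2) • e) '' Icc t 1 ×ˢ Icc 0 r

lemma fan_mono (a d e : V) {t t' r r' : ℝ} (ht : t' ≤ t) (hr : r ≤ r') :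
    fan a d e t r ⊆ fan a d e t' r' :=
  image_mono (prod_mono (Icc_subset_Icc_left ht) (Icc_subset_Icc_right hr))

lemma fan_subset_of_fan_subset {S W : Set V} {a d e : V} {t r h : ℝ} (ht : 0 < t) (ht1 : t ≤ 1)
    (hconv : ∀ y ∈ S, ∀ z ∈ S, y - (a + t • d) ∈ W → z - (a + t • d) ∈ W → segment ℝ y z ⊆ S)
    (hd : ∀ c : ℝ, |c| ≤ h → c • d ∈ W) (he : ∀ c ∈ Icc (0 : ℝ) r, c • e ∈ W)
    (hbase : ∀ u ∈ Icc (0 : ℝ) 1, a + u • d ∈ S) (hfan : fan a d e t r ⊆ S) :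
    fan a d e (max 0 (t - h / 2)) (r / 2) ⊆ S := by
  rintro _ ⟨⟨u, ρ⟩, ⟨⟨hu, hu1⟩, hρ0, hρr⟩, rfl⟩
  dsimp only
  rcases le_or_gt t u with htu | hut
  · exact hfan ⟨(u, ρ), ⟨⟨htu, hu1⟩, hρ0, by linarith⟩, rfl⟩
  have hu0 : 0 ≤ u := le_of_max_le_left hu
  have hhu : t - h / 2 ≤ u := le_of_max_le_right hu
  have hden : 0 < 2 * t - u := by linarith
  set u' := u * t / (2 * t - u)
  have hu'0 : 0 ≤ u' := by positivity
  have hu'u : u' ≤ u := by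
    rw [div_le_iff₀ hden]; nlinarith
  have hu't : 2 * u - t ≤ u' := by
    rw [le_div_iff₀ hden]; nlinarith [sq_nonneg (t - u)]
  have hy : a + u' • d ∈ S := hbase u' ⟨hu'0, by linarith⟩
  have hz : a + t • d + (t * (2 * ρ)) • e ∈ S :=
    hfan ⟨(t, 2 * ρ), ⟨⟨le_rfl, ht1⟩, by linarith, by linarith⟩, rfl⟩
  have hyW : a + u' • d - (a + t • d) ∈ W := by
    convert hd (u' - t) (by rw [abs_le]; constructor <;> linarith) using 1
    module
  have hzW : a + t • d + (t * (2 * ρ)) • e - (a + t • d) ∈ W := by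
    convert he (t * (2 * ρ)) ⟨by positivity, by nlinarith⟩ using 1
    abel
  exact hconv _ hy _ hz hyW hzW (mem_segment_fan a d e hu0 hut)

lemma exists_pos_fan_subset {S W : Set V} {a d e : V} {r h : ℝ} (hh : 0 < h) (hr : 0 < r)
    (hconv : ∀ t ∈ Icc (0 : ℝ) 1, ∀ y ∈ S, ∀ z ∈ S, y - (a + t • d) ∈ W → z - (a + t • d) ∈ W →
      segment ℝ y z ⊆ S)
    (hd : ∀ c : ℝ, |c| ≤ h → c • d ∈ W) (he : ∀ c ∈ Icc (0 : ℝ) r, c • e ∈ W)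
    (hbase : ∀ u ∈ Icc (0 : ℝ) 1, a + u • d ∈ S) (htop : fan a d e 1 r ⊆ S) :
    ∃ δ > 0, fan a d e 0 δ ⊆ S := by
  have hfan : ∀ k : ℕ, fan a d e (max 0 (1 - k * (h / 2))) (r / 2 ^ k) ⊆ S := by
    intro k
    induction k with
    | zero => simpa using htop
    | succ k ih =>
      rcases le_or_gt (1 - k * (h / 2)) 0 with hk | hk
      · rw [max_eq_left hk] at ih
        refine (fan_mono a d e (le_max_left _ _) ?_).trans ih
        gcongr <;> simp
      have hk1 : 1 - k * (h / 2) ≤ 1 := by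
        have : (0 : ℝ) ≤ k * (h / 2) := by positivity
        linarith
      have hrk : r / 2 ^ k ≤ r := div_le_self hr.le (one_le_pow₀ one_le_two)
      have hstep := fan_subset_of_fan_subset hk hk1 (hconv _ ⟨hk.le, hk1⟩) hd
        (fun c hc => he c ⟨hc.1, hc.2.trans hrk⟩) hbase (by rwa [max_eq_right hk.le] at ih)
      convert hstep using 2
      · congr 1; push_cast; ring
      · rw [pow_succ, div_div]
  obtain ⟨k, hk⟩ := exists_nat_ge (2 / h)
  have hk0 : max 0 (1 - k * (h / 2)) = 0 := by
    refine max_eq_left ?_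
    rw [div_le_iff₀ hh] at hk
    linarith
  exact ⟨r / 2 ^ k, by positivity, hk0 ▸ hfan k⟩

end Fan

section TopologicalVectorSpace

variable {V : Type*} [AddCommGroup V] [Module ℝ V] [TopologicalSpace V]

lemma exists_pos_forall_abs_le_smul_mem [ContinuousSMul ℝ V] {W : Set V} (hW : W ∈ 𝓝 (0 : V))
    (v : V) :
    ∃ ε > 0, ∀ c : ℝ, |c| ≤ ε → c • v ∈ W := by
  have hev : ∀ᶠ c in 𝓝 (0 : ℝ), c • v ∈ W :=
    ((continuous_id.smul continuous_const).tendsto' 0 0 (zero_smul ℝ v)).eventually hW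
  obtain ⟨ε, hε, hball⟩ := Metric.eventually_nhds_iff.1 hev
  exact ⟨ε / 2, by positivity, fun c hc => hball (by rw [Real.dist_eq, sub_zero]; linarith)⟩

variable [IsTopologicalAddGroup V]

lemma IsLocallyConvexSet.exists_nhds_zero_segment_subset {S K : Set V}
    (hS : IsLocallyConvexSet S) (hK : IsCompact K) (hKS : K ⊆ S) :
    ∃ W ∈ 𝓝 (0 : V), ∀ x ∈ K, ∀ y ∈ S, ∀ z ∈ S, y - x ∈ W → z - x ∈ W →
      segment ℝ y z ⊆ S := by
  let := IsTopologicalAddGroup.rightUniformSpace V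
  choose! N hN hNS using hS
  obtain ⟨U, hU, hUN⟩ := lebesgue_number_lemma_nhds' (U := fun x _ => N x) hK
    fun x hx => hN x (hKS hx)
  obtain ⟨W, hW, hWU⟩ := (uniformity_eq_comap_nhds_zero' V ▸ hU : U ∈ comap _ _)
  refine ⟨W, hW, fun x hx y hy z hz hyx hzx => ?_⟩
  obtain ⟨⟨c, hc⟩, hball⟩ := hUN x hx
  have hmem : ∀ w ∈ S, w - x ∈ W → w ∈ N c ∩ S := fun w hw hwx =>
    ⟨hball (hWU (by simpa [sub_eq_add_neg] using hwx)), hw⟩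
  exact ((hNS c (hKS hc)).segment_subset (hmem y hy hyx) (hmem z hz hzx)).trans
    inter_subset_right

variable [ContinuousSMul ℝ V]

lemma IsClosed.setOf_segment_subset {α : Type*} [TopologicalSpace α] {T : Set V}
    (hT : IsClosed T) {f g : α → V} (hf : Continuous f) (hg : Continuous g) :
    IsClosed {x | segment ℝ (f x) (g x) ⊆ T} := by
  have hset : {x | segment ℝ (f x) (g x) ⊆ T} =
      ⋂ θ ∈ Icc (0 : ℝ) 1, (fun x => f x + θ • (g x - f x)) ⁻¹' T := by
    ext x
    simp only [segment_eq_image', image_subset_iff, mem_ofPred_eq, mem_iInter]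
    rfl
  rw [hset]
  exact isClosed_biInter fun θ _ => hT.preimage (by fun_prop)

lemma IsLocallyConvexSet.exists_pos_segment_subset {S : Set V} (hS : IsLocallyConvexSet S)
    {a m b : V} (ham : segment ℝ a m ⊆ S) (hmb : segment ℝ m b ⊆ S) :
    ∃ δ > 0, ∀ ρ ∈ Icc (0 : ℝ) δ, segment ℝ a (m + ρ • (b - m)) ⊆ S := by
  have hbase : ∀ u ∈ Icc (0 : ℝ) 1, a + u • (m - a) ∈ S := fun u hu =>
    ham (segment_eq_image' ℝ a m ▸ mem_image_of_mem _ hu)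
  obtain ⟨W, hW, hconv⟩ := hS.exists_nhds_zero_segment_subset
    (isCompact_Icc.image (by fun_prop : Continuous fun u : ℝ => a + u • (m - a)))
    (image_subset_iff.2 hbase)
  obtain ⟨h, hh, hd⟩ := exists_pos_forall_abs_le_smul_mem hW (m - a)
  obtain ⟨ε, hε, he⟩ := exists_pos_forall_abs_le_smul_mem hW (b - m)
  have htop : fan a (m - a) (b - m) 1 (min ε 1) ⊆ S := by
    rintro _ ⟨⟨u, ρ⟩, ⟨⟨hu, hu1⟩, hρ0, hρr⟩, rfl⟩
    obtain rfl : u = 1 := le_antisymm hu1 hu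
    refine hmb ((segment_eq_image' ℝ m b).symm ▸ ⟨ρ, ⟨hρ0, hρr.trans (min_le_right _ _)⟩, ?_⟩)
    module
  obtain ⟨δ, hδ, hfan⟩ := exists_pos_fan_subset hh (lt_min hε one_pos)
    (fun t ht => hconv _ (mem_image_of_mem _ ht)) hd
    (fun c hc => he c ((abs_of_nonneg hc.1).trans_le (hc.2.trans (min_le_left _ _)))) hbase htop
  refine ⟨δ, hδ, fun ρ hρ => ?_⟩
  rw [segment_eq_image']
  rintro _ ⟨θ, hθ, rfl⟩
  exact hfan ⟨(θ, ρ), ⟨hθ, hρ⟩, by module⟩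

lemma IsLocallyConvexSet.segment_subset_of_segment_subset {S T C : Set V}
    (hS : IsLocallyConvexSet S) (hC : Convex ℝ C) (hT : IsClosed T) (hST : S = T ∩ C)
    {a m b : V} (ham : segment ℝ a m ⊆ S) (hmb : segment ℝ m b ⊆ S) :
    segment ℝ a b ⊆ S := by
  have hSC : S ⊆ C := hST ▸ inter_subset_right
  have hmem : ∀ ρ ∈ Icc (0 : ℝ) 1, m + ρ • (b - m) ∈ segment ℝ m b := fun ρ hρ =>
    segment_eq_image' ℝ m b ▸ mem_image_of_mem _ hρ
  set s := {ρ : ℝ | segment ℝ a (m + ρ • (b - m)) ⊆ S}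
  have hclosed : IsClosed (s ∩ Icc 0 1) := by
    have hsT : s ∩ Icc 0 1 = {ρ : ℝ | segment ℝ a (m + ρ • (b - m)) ⊆ T} ∩ Icc 0 1 := by
      ext ρ
      refine and_congr_left fun hρ => ?_
      have hsegC : segment ℝ a (m + ρ • (b - m)) ⊆ C :=
        hC.segment_subset (hSC (ham (left_mem_segment ℝ a m))) (hSC (hmb (hmem ρ hρ)))
      simp only [s, mem_ofPred_eq, hST, subset_inter_iff, hsegC, and_true]
    rw [hsT]
    exact (hT.setOf_segment_subset continuous_const (by fun_prop)).inter isClosed_Icc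
  have hs : Icc (0 : ℝ) 1 ⊆ s := by
    refine hclosed.Icc_subset_of_forall_exists_gt (by simpa [s] using ham) ?_
    rintro ρ₀ ⟨hρ₀, hρ₀0, hρ₀1⟩ y hy
    have hρ₀1' : 0 < 1 - ρ₀ := sub_pos.2 hρ₀1
    obtain ⟨δ, hδ, hext⟩ := hS.exists_pos_segment_subset hρ₀
      (((convex_segment m b).segment_subset (hmem ρ₀ ⟨hρ₀0, hρ₀1.le⟩)
        (right_mem_segment ℝ m b)).trans hmb)
    set ρ := min δ ((y - ρ₀) / (1 - ρ₀))
    have hρ : 0 < ρ := lt_min hδ (div_pos (sub_pos.2 hy) hρ₀1')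
    refine ⟨ρ₀ + ρ * (1 - ρ₀), ?_, by nlinarith, ?_⟩
    · show segment ℝ a (m + (ρ₀ + ρ * (1 - ρ₀)) • (b - m)) ⊆ S
      convert hext ρ ⟨hρ.le, min_le_left _ _⟩ using 2
      module
    · have := (le_div_iff₀ hρ₀1').1 (min_le_right δ ((y - ρ₀) / (1 - ρ₀)))
      linarith
  simpa [s] using hs ⟨zero_le_one, le_rfl⟩

theorem IsLocallyConvexSet.convex_of_isPreconnected {S T C : Set V} (hS : IsLocallyConvexSet S)
    (hconn : IsPreconnected S) (hC : Convex ℝ C) (hT : IsClosed T) (hST : S = T ∩ C) :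
    Convex ℝ S := by
  refine convex_iff_segment_subset.2 fun x hx y hy =>
    hconn.induction₂ (fun x y => segment ℝ x y ⊆ S) (fun x hx => ?_)
      (fun _ _ _ _ _ _ => hS.segment_subset_of_segment_subset hC hT hST)
      (fun x y _ _ h => segment_symm ℝ x y ▸ h) hx hy
  obtain ⟨N, hN, hNS⟩ := hS x hx
  filter_upwards [mem_nhdsWithin_of_mem_nhds hN, self_mem_nhdsWithin] with y hyN hyS
  exact (hNS.segment_subset ⟨mem_of_mem_nhds hN, hx⟩ ⟨hyN, hyS⟩).trans inter_subset_right

end TopologicalVectorSpace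

lemma isLocallyConvexSet_range {X V : Type*} [TopologicalSpace X] [TopologicalSpace V]
    [AddCommGroup V] [Module ℝ V] [LocallyConvexSpace ℝ V] {f : X → V}
    (hlcd : HasLocalConvexityData f) (hopen : OpenOntoImage f) :
    IsLocallyConvexSet (range f) := by
  rintro _ ⟨x, rfl⟩
  obtain ⟨U, hU, -, hUopen, K, hK, -, hUK, ⟨N, hN, hKN⟩, -⟩ := hlcd x univ univ_mem
  obtain ⟨W, hWopen, hUW⟩ := hopen U hUopen
  have hxW : f x ∈ W := ((hUW ▸ mem_image_of_mem f (mem_of_mem_nhds hU)) : f x ∈ W ∩ _).1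
  obtain ⟨M, ⟨hM, hMconv⟩, hMNW⟩ := (LocallyConvexSpace.convex_basis (𝕜 := ℝ) (f x)).mem_iff.1
    (inter_mem hN (hWopen.mem_nhds hxW))
  refine ⟨M, hM, ?_⟩
  have hMK : M ∩ range f = M ∩ K := by
    ext y
    refine and_congr_right fun hyM => ⟨fun hy => hUK ?_, fun hy => ?_⟩
    · exact hUW ▸ ⟨(hMNW hyM).2, hy⟩
    · exact (hUW ▸ hKN ⟨hy, (hMNW hyM).1⟩ : y ∈ W ∩ range f).2
  exact hMK ▸ hMconv.inter hK

theorem stmt_7_general {X V : Type*} [TopologicalSpace X] [ConnectedSpace X]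
    [TopologicalSpace V] [AddCommGroup V] [Module ℝ V]
    [IsTopologicalAddGroup V] [ContinuousSMul ℝ V] [LocallyConvexSpace ℝ V]
    {f : X → V} (hf : Continuous f) (hlcd : HasLocalConvexityData f)
    (hopen : OpenOntoImage f)
    {C : Set V} (hC : Convex ℝ C)
    (hclosedinC : ∃ T : Set V, IsClosed T ∧ Set.range f = T ∩ C) :
    Convex ℝ (Set.range f) := by
  obtain ⟨T, hT, hTC⟩ := hclosedinC
  exact (isLocallyConvexSet_range hlcd hopen).convex_of_isPreconnected
    (isPreconnected_range hf) hC hT hTC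

/-- Let `X` be a connected Hausdorff space, `V` a locally convex topological
vector space, and `f : X → V` continuous with local convexity data. If `f` is
open onto its image and `f(X)` is closed in a convex subset `C` of `V`, then
`f(X)` is convex. -/
theorem stmt_7 {X V : Type*} [TopologicalSpace X] [T2Space X] [ConnectedSpace X]
    [TopologicalSpace V] [AddCommGroup V] [Module ℝ V]
    [IsTopologicalAddGroup V] [ContinuousSMul ℝ V] [LocallyConvexSpace ℝ V]
    {f : X → V} (hf : Continuous f) (hlcd : HasLocalConvexityData f)
    (hopen : OpenOntoImage f)
    {C : Set V} (hC : Convex ℝ C) (hsub : Set.range f ⊆ C)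
    (hclosedinC : ∃ T : Set V, IsClosed T ∧ Set.range f = T ∩ C) :
    Convex ℝ (Set.range f) :=
  stmt_7_general hf hlcd hopen hC hclosedinC
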